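/- arXiv:2309.00849 — 2 statements merged into one kernel-verified Lean document; each statement's English description precedes it below -/
import Mathlib

section
/- There exists a continuous function a : [0,∞) → [0,∞) such that a ∉ L^q(0,∞) for every 1 ≤ q ≤ ∞, yet sup_{t>0} (1/t)∫₀ᵗ a(s) ds < ∞. -/
/-!
Take `a = 1 + ∑ₙ spike n`, where `spike n` is a tent of height `n` and half-width `2⁻ⁿ` centred
at `n + 1`. Near any point only finitely many tents are nonzero, so `a` is continuous. Since
`a ≥ 1` on a half-line of infinite measure, `a ∉ L^q` for `q < ∞`, and the heights `n` rule out
`L^∞` because `a` is continuous. The tent masses are at most `2n·2⁻ⁿ`, which is summable, so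
`∫₀ᵗ (a - 1) ≤ K`; as the tents vanish on `[0, 1]`, even `∫₀ᵗ (a - 1) ≤ K t`, and the averages of
`a` stay below `1 + K`.
-/

open MeasureTheory Filter Set Topology

theorem MeasureTheory.MemLp.bddAbove_norm_image_of_continuousOn {X E : Type*}
    [TopologicalSpace X] [MeasurableSpace X] {μ : Measure X} [μ.IsOpenPosMeasure]
    [NormedAddCommGroup E] {a : X → E} {U : Set X} (hU : IsOpen U) (ha : ContinuousOn a U)
    (hmem : MemLp a ⊤ (μ.restrict U)) : BddAbove ((‖a ·‖) '' U) := by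
  set C := (eLpNormEssSup a (μ.restrict U)).toReal
  have hC : ∀ᵐ x ∂μ.restrict U, min ‖a x‖ C = ‖a x‖ := by
    have hfin : eLpNormEssSup a (μ.restrict U) ≠ ⊤ := by
      simpa [eLpNorm_exponent_top] using hmem.eLpNorm_ne_top
    filter_upwards [ae_le_eLpNormEssSup (f := a)] with x hx
    rw [← ofReal_norm] at hx
    exact min_eq_left ((ENNReal.ofReal_le_iff_le_toReal hfin).1 hx)
  refine ⟨C, forall_mem_image.2 fun x hx => ?_⟩
  calc ‖a x‖ = min ‖a x‖ C :=
        (Measure.eqOn_open_of_ae_eq hC hU (ha.norm.inf continuousOn_const) ha.norm hx).symm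
    _ ≤ C := min_le_right _ _

theorem not_memLp_of_one_le_norm {X E : Type*} [MeasurableSpace X] {μ : Measure X}
    [NormedAddCommGroup E] {a : X → E} {q : ENNReal} (hq0 : q ≠ 0) (hq : q ≠ ⊤)
    (hμ : μ univ = ⊤) (ha : ∀ x, 1 ≤ ‖a x‖) : ¬ MemLp a q μ := by
  intro hmem
  have hone : MemLp (fun _ => (1:ℝ)) q μ :=
    hmem.of_le aestronglyMeasurable_const (ae_of_all _ fun x => by simpa using ha x)
  simp [memLp_const_iff hq0 hq, hμ] at hone

theorem intervalIntegral_le_of_eq_zero_off_closedBall {f : ℝ → ℝ} {u v x r M : ℝ}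
    (huv : u ≤ v) (hf : IntervalIntegrable f volume u v) (hr : 0 ≤ r)
    (hfM : ∀ t, f t ≤ M) (hf0 : ∀ t ∉ Metric.closedBall x r, f t = 0) :
    ∫ t in u..v, f t ≤ M * (2 * r) := by
  set B := Metric.closedBall x r
  have hM : 0 ≤ M := by
    have hout : x + (r + 1) ∉ B := by
      rw [Metric.mem_closedBall, Real.dist_eq, add_sub_cancel_left, abs_of_pos (by linarith)]
      linarith
    exact hf0 _ hout ▸ hfM _
  have hind : IntervalIntegrable (B.indicator fun _ => M) volume u v :=
    ⟨intervalIntegrable_const.1.indicator measurableSet_closedBall,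
      intervalIntegrable_const.2.indicator measurableSet_closedBall⟩
  calc ∫ t in u..v, f t
      ≤ ∫ t in u..v, B.indicator (fun _ => M) t := by
        refine intervalIntegral.integral_mono_on huv hf hind fun t _ => ?_
        by_cases ht : t ∈ B
        · simpa [ht] using hfM t
        · simp [ht, hf0 t ht]
    _ = volume.real (B ∩ Ioc u v) * M := by
        rw [intervalIntegral.integral_of_le huv, integral_indicator_const _ measurableSet_closedBall,
          measureReal_restrict_apply measurableSet_closedBall, smul_eq_mul]
    _ ≤ volume.real B * M := by
        gcongr
        · exact measure_closedBall_lt_top.ne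
        · exact inter_subset_left
    _ = M * (2 * r) := by rw [Real.volume_real_closedBall hr, mul_comm]

section SeriesVanishingOnIic

variable {g : ℕ → ℝ → ℝ}

theorem tsum_eq_sum_range_of_eq_zero_of_le (hg0 : ∀ (n : ℕ) (t : ℝ), t ≤ n → g n t = 0)
    {t : ℝ} {N : ℕ} (htN : t ≤ N) : ∑' n, g n t = ∑ n ∈ Finset.range N, g n t :=
  tsum_eq_sum fun n hn => hg0 n t <| htN.trans <| by
    exact_mod_cast not_lt.1 (Finset.mem_range.not.1 hn)

theorem continuous_tsum_of_eq_zero_of_le (hg : ∀ n, Continuous (g n))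
    (hg0 : ∀ (n : ℕ) (t : ℝ), t ≤ n → g n t = 0) : Continuous fun t => ∑' n, g n t := by
  refine continuous_iff_continuousAt.2 fun x => ?_
  have hsum : (fun t => ∑ n ∈ Finset.range (⌈x⌉₊ + 1), g n t) =ᶠ[𝓝 x] fun t => ∑' n, g n t := by
    filter_upwards [Iio_mem_nhds (lt_add_one x)] with t ht
    refine (tsum_eq_sum_range_of_eq_zero_of_le hg0 ?_).symm
    push_cast
    linarith [Nat.le_ceil x, mem_Iio.1 ht]
  exact (continuous_finsetSum _ fun n _ => hg n).continuousAt.congr hsum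

theorem intervalIntegral_tsum_le (hg : ∀ n, Continuous (g n))
    (hg0 : ∀ (n : ℕ) (t : ℝ), t ≤ n → g n t = 0) {b : ℕ → ℝ} (hb : Summable b)
    (hb0 : ∀ n, 0 ≤ b n) {t : ℝ} (ht : 0 ≤ t) (hgb : ∀ n, ∫ s in 0..t, g n s ≤ b n) :
    ∫ s in 0..t, ∑' n, g n s ≤ ∑' n, b n :=
  calc ∫ s in 0..t, ∑' n, g n s = ∫ s in 0..t, ∑ n ∈ Finset.range ⌈t⌉₊, g n s :=
        intervalIntegral.integral_congr fun _ hs =>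
          tsum_eq_sum_range_of_eq_zero_of_le hg0 (((uIcc_of_le ht ▸ hs).2).trans (Nat.le_ceil t))
    _ = ∑ n ∈ Finset.range ⌈t⌉₊, ∫ s in 0..t, g n s :=
        intervalIntegral.integral_finsetSum fun n _ => (hg n).intervalIntegrable _ _
    _ ≤ ∑ n ∈ Finset.range ⌈t⌉₊, b n := Finset.sum_le_sum fun n _ => hgb n
    _ ≤ ∑' n, b n := hb.sum_le_tsum _ fun n _ => hb0 n

end SeriesVanishingOnIic

noncomputable def spike (n : ℕ) (t : ℝ) : ℝ := n * max 0 (1 - 2 ^ n * |t - (n + 1)|)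

theorem spike_nonneg (n : ℕ) (t : ℝ) : 0 ≤ spike n t := by
  unfold spike; positivity

theorem spike_le (n : ℕ) (t : ℝ) : spike n t ≤ n := by
  refine mul_le_of_le_one_right n.cast_nonneg (max_le zero_le_one ?_)
  have : 0 ≤ (2:ℝ) ^ n * |t - (n + 1)| := by positivity
  linarith

theorem continuous_spike (n : ℕ) : Continuous (spike n) := by
  unfold spike; fun_prop

theorem spike_natCast_add_one (n : ℕ) : spike n (n + 1) = n := by
  simp [spike]

theorem spike_eq_zero_of_le_abs {n : ℕ} {t : ℝ} (h : (2⁻¹ : ℝ) ^ n ≤ |t - (n + 1)|) :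
    spike n t = 0 := by
  have h1 : 1 ≤ (2:ℝ) ^ n * |t - (n + 1)| :=
    calc (1:ℝ) = 2 ^ n * 2⁻¹ ^ n := by rw [← mul_pow]; norm_num
      _ ≤ 2 ^ n * |t - (n + 1)| := by gcongr
  simp [spike, max_eq_left (by linarith : 1 - (2:ℝ) ^ n * |t - (n + 1)| ≤ 0)]

theorem spike_eq_zero_of_one_le_abs {n : ℕ} {t : ℝ} (h : 1 ≤ |t - (n + 1)|) : spike n t = 0 :=
  spike_eq_zero_of_le_abs <| (pow_le_one₀ (by norm_num) (by norm_num)).trans h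

theorem spike_eq_zero_of_le {n : ℕ} {t : ℝ} (ht : t ≤ n) : spike n t = 0 := by
  refine spike_eq_zero_of_one_le_abs ?_
  rw [abs_of_nonpos (by linarith)]
  linarith

theorem spike_natCast_add_one_of_ne {m n : ℕ} (h : n ≠ m) : spike n (m + 1) = 0 := by
  refine spike_eq_zero_of_one_le_abs ?_
  have hne : (m : ℤ) - n ≠ 0 := by omega
  rw [add_sub_add_right_eq_sub]
  exact_mod_cast Int.one_le_abs hne

theorem intervalIntegral_spike_le (n : ℕ) {t : ℝ} (ht : 0 ≤ t) :
    ∫ s in 0..t, spike n s ≤ n * (2 * 2⁻¹ ^ n) :=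
  intervalIntegral_le_of_eq_zero_off_closedBall ht ((continuous_spike n).intervalIntegrable _ _)
    (by positivity) (spike_le n) fun s hs => spike_eq_zero_of_le_abs <| by
      rw [Metric.mem_closedBall, Real.dist_eq, not_le] at hs
      exact hs.le

noncomputable def spikes (t : ℝ) : ℝ := ∑' n, spike n t

theorem continuous_spikes : Continuous spikes :=
  continuous_tsum_of_eq_zero_of_le continuous_spike fun _ _ => spike_eq_zero_of_le

theorem spikes_nonneg (t : ℝ) : 0 ≤ spikes t :=
  tsum_nonneg fun n => spike_nonneg n t

theorem spikes_natCast_add_one (m : ℕ) : spikes (m + 1) = m :=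
  (tsum_eq_single m fun _ h => spike_natCast_add_one_of_ne h).trans (spike_natCast_add_one m)

theorem spikes_eq_zero_of_le_one {t : ℝ} (ht : t ≤ 1) : spikes t = 0 := by
  rw [spikes, tsum_eq_sum_range_of_eq_zero_of_le (fun _ _ => spike_eq_zero_of_le)
    (by exact_mod_cast ht : t ≤ (1 : ℕ))]
  simp [spike]

theorem summable_spike_mass : Summable fun n : ℕ => (n : ℝ) * (2 * 2⁻¹ ^ n) :=
  ((summable_pow_mul_geometric_of_norm_lt_one 1 (by norm_num : ‖(2⁻¹ : ℝ)‖ < 1)).mul_left 2).congr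
    fun n => by ring

theorem exists_intervalIntegral_spikes_le_mul :
    ∃ K : ℝ, ∀ t : ℝ, 0 ≤ t → ∫ s in 0..t, spikes s ≤ K * t := by
  set K := ∑' n : ℕ, (n : ℝ) * (2 * 2⁻¹ ^ n)
  have hK : 0 ≤ K := tsum_nonneg fun n => by positivity
  refine ⟨K, fun t ht => ?_⟩
  rcases le_total t 1 with ht1 | ht1
  · have hzero : ∫ s in 0..t, spikes s = 0 := by
      rw [intervalIntegral.integral_congr (g := fun _ => 0) fun s hs =>
        spikes_eq_zero_of_le_one (((uIcc_of_le ht ▸ hs).2).trans ht1)]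
      simp
    rw [hzero]; positivity
  · calc ∫ s in 0..t, spikes s ≤ K :=
          intervalIntegral_tsum_le continuous_spike (fun _ _ => spike_eq_zero_of_le)
            summable_spike_mass (fun n => by positivity) ht fun n => intervalIntegral_spike_le n ht
      _ ≤ K * t := le_mul_of_one_le_right hK ht1

theorem not_bddAbove_norm_one_add_spikes : ¬ BddAbove ((‖1 + spikes ·‖) '' Ioi 0) := by
  rintro ⟨C, hC⟩
  obtain ⟨m, hm⟩ := exists_nat_gt C
  have hle : ‖1 + spikes (m + 1)‖ ≤ C := hC ⟨(m : ℝ) + 1, mem_Ioi.2 (by positivity), rfl⟩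
  rw [spikes_natCast_add_one, Real.norm_of_nonneg (by positivity)] at hle
  linarith

theorem stmt_4 :
    ∃ a : ℝ → ℝ, ContinuousOn a (Ici 0) ∧ (∀ t ∈ Ici (0:ℝ), 0 ≤ a t) ∧
      (∀ q : ENNReal, 1 ≤ q → ¬ MemLp a q (volume.restrict (Ioi (0:ℝ)))) ∧
      (∃ C : ℝ, ∀ t > (0:ℝ), (1 / t) * ∫ s in (0:ℝ)..t, a s ≤ C) := by
  obtain ⟨K, hK⟩ := exists_intervalIntegral_spikes_le_mul
  have hcont : Continuous fun t => 1 + spikes t := continuous_const.add continuous_spikes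
  have hone : ∀ t, 1 ≤ ‖1 + spikes t‖ := fun t => by
    rw [Real.norm_of_nonneg (by linarith [spikes_nonneg t])]
    linarith [spikes_nonneg t]
  refine ⟨fun t => 1 + spikes t, hcont.continuousOn, fun t _ => by linarith [spikes_nonneg t],
    fun q hq => ?_, 1 + K, fun t ht => ?_⟩
  · rcases eq_or_ne q ⊤ with rfl | hq_top
    · exact fun hmem => not_bddAbove_norm_one_add_spikes
        (hmem.bddAbove_norm_image_of_continuousOn isOpen_Ioi hcont.continuousOn)
    · exact not_memLp_of_one_le_norm (zero_lt_one.trans_le hq).ne' hq_top (by simp) hone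
  · calc (1 / t) * ∫ s in (0:ℝ)..t, (1 + spikes s) = 1 + (1 / t) * ∫ s in (0:ℝ)..t, spikes s := by
          rw [intervalIntegral.integral_add intervalIntegrable_const
            (continuous_spikes.intervalIntegrable _ _)]
          simp only [intervalIntegral.integral_const, sub_zero, smul_eq_mul, mul_one]
          field_simp
      _ ≤ 1 + (1 / t) * (K * t) := by gcongr; exact hK t ht.le
      _ = 1 + K := by field_simp
end

section
/- Let I ⊂ ℝ be an interval, X : I → [0,∞) continuous, and suppose X(t) ≤ a + b·X(t)^θ for all t ∈ I, where a, b > 0 and θ > 1 are constants. If for some t₀ ∈ I we have X(t₀) ≤ a and a·b^{1/(θ−1)} < (θ−1)·θ^{θ/(1−θ)}, then X(t) < θa/(θ−1) for all t ∈ I. -/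
/-!
Put `M = θ a / (θ - 1)`. The smallness condition is exactly what makes `a + b M ^ θ < M`, so the
constraint `X ≤ a + b X ^ θ` forbids the value `M`. Since `X` is continuous on the interval and
starts below `M` at `t₀`, the intermediate value theorem keeps it below `M` everywhere.
-/

open Set

theorem IsPreconnected.lt_of_forall_ne {X α : Type*} [TopologicalSpace X] [LinearOrder α]
    [TopologicalSpace α] [OrderClosedTopology α] {s : Set X} (hs : IsPreconnected s)
    {f : X → α} (hf : ContinuousOn f s) {M : α} (hM : ∀ x ∈ s, f x ≠ M) {a b : X}
    (ha : a ∈ s) (hb : b ∈ s) (hfa : f a < M) : f b < M := by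
  by_contra! hfb
  obtain ⟨c, hc, hfc⟩ := hs.intermediate_value ha hb hf ⟨hfa.le, hfb⟩
  exact hM c hc hfc

namespace Real

variable {a b θ : ℝ}

lemma threshold_mul_rpow_eq_inv (hθ : 1 < θ) :
    ((θ - 1) * θ ^ (θ / (1 - θ)) * (θ / (θ - 1))) ^ (θ - 1) = θ⁻¹ := by
  have hθ₀ : 0 < θ := by linarith
  have h1θ : 1 - θ ≠ 0 := by linarith
  have hbase : (θ - 1) * θ ^ (θ / (1 - θ)) * (θ / (θ - 1)) = θ ^ (1 / (1 - θ)) := by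
    rw [show 1 / (1 - θ) = θ / (1 - θ) + 1 by field_simp; ring, rpow_add_one hθ₀.ne']
    field_simp [show θ - 1 ≠ 0 by linarith]
  rw [hbase, ← rpow_mul hθ₀.le, show 1 / (1 - θ) * (θ - 1) = -1 by field_simp; ring,
    rpow_neg_one]

lemma mul_div_rpow_eq (ha : 0 ≤ a) (hb : 0 ≤ b) (hθ : 1 < θ) :
    b * (θ * a / (θ - 1)) ^ (θ - 1) = (a * b ^ (1 / (θ - 1)) * (θ / (θ - 1))) ^ (θ - 1) := by
  have hs : 0 < θ - 1 := by linarith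
  rw [mul_rpow (by positivity) (by positivity), mul_rpow ha (by positivity), one_div,
    rpow_inv_rpow hb hs.ne', show θ * a / (θ - 1) = a * (θ / (θ - 1)) by ring,
    mul_rpow ha (by positivity)]
  ring

lemma mul_rpow_sub_one_lt_inv (ha : 0 < a) (hb : 0 < b) (hθ : 1 < θ)
    (hsmall : a * b ^ (1 / (θ - 1)) < (θ - 1) * θ ^ (θ / (1 - θ))) :
    b * (θ * a / (θ - 1)) ^ (θ - 1) < θ⁻¹ := by
  have hs : 0 < θ - 1 := by linarith
  rw [mul_div_rpow_eq ha.le hb.le hθ, ← threshold_mul_rpow_eq_inv hθ]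
  gcongr

lemma add_mul_rpow_lt (ha : 0 < a) (hb : 0 < b) (hθ : 1 < θ)
    (hsmall : a * b ^ (1 / (θ - 1)) < (θ - 1) * θ ^ (θ / (1 - θ))) :
    a + b * (θ * a / (θ - 1)) ^ θ < θ * a / (θ - 1) := by
  set M := θ * a / (θ - 1) with hM
  have hθ₀ : 0 < θ := by linarith
  have hs : 0 < θ - 1 := by linarith
  have hMpos : 0 < M := by positivity
  have hMa : M - a = θ⁻¹ * M := by rw [hM]; field_simp; ring
  calc a + b * M ^ θ = a + b * M ^ (θ - 1) * M := by
        rw [mul_assoc, rpow_sub_one hMpos.ne', div_mul_cancel₀ _ hMpos.ne']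
    _ < a + θ⁻¹ * M := by gcongr; exact mul_rpow_sub_one_lt_inv ha hb hθ hsmall
    _ = M := by linarith

end Real

theorem stmt_6_general (I : Set ℝ) (hI : I.OrdConnected) (X : ℝ → ℝ)
    (hXcont : ContinuousOn X I)
    (a b θ : ℝ) (ha : 0 < a) (hb : 0 < b) (hθ : 1 < θ)
    (hineq : ∀ t ∈ I, X t ≤ a + b * (X t) ^ θ)
    (t₀ : ℝ) (ht₀ : t₀ ∈ I) (hX₀ : X t₀ ≤ a)
    (hsmall : a * b ^ (1 / (θ - 1)) < (θ - 1) * θ ^ (θ / (1 - θ))) :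
    ∀ t ∈ I, X t < θ * a / (θ - 1) := by
  have hgap := Real.add_mul_rpow_lt ha hb hθ hsmall
  have ha_lt : a < θ * a / (θ - 1) := by
    rw [lt_div_iff₀ (by linarith)]
    nlinarith
  have hX_ne : ∀ t ∈ I, X t ≠ θ * a / (θ - 1) := fun t ht hXt =>
    (hineq t ht).not_gt (hXt ▸ hgap)
  exact fun t ht => hI.isPreconnected.lt_of_forall_ne hXcont hX_ne ht₀ ht (hX₀.trans_lt ha_lt)

theorem stmt_6 (I : Set ℝ) (hI : I.OrdConnected) (X : ℝ → ℝ)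
    (hXcont : ContinuousOn X I) (hXnonneg : ∀ t ∈ I, 0 ≤ X t)
    (a b θ : ℝ) (ha : 0 < a) (hb : 0 < b) (hθ : 1 < θ)
    (hineq : ∀ t ∈ I, X t ≤ a + b * (X t) ^ θ)
    (t₀ : ℝ) (ht₀ : t₀ ∈ I) (hX₀ : X t₀ ≤ a)
    (hsmall : a * b ^ (1 / (θ - 1)) < (θ - 1) * θ ^ (θ / (1 - θ))) :
    ∀ t ∈ I, X t < θ * a / (θ - 1) :=
  stmt_6_general I hI X hXcont a b θ ha hb hθ hineq t₀ ht₀ hX₀ hsmall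
end
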